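/- arXiv:2412.07849 — 7 statements merged into one kernel-verified Lean document; each statement's English description precedes it below -/
import Mathlib

section
/- Let $U$ be a complex manifold, $f : U \to \mathbb{C}^\times$ a holomorphic function with $|f| < 1$ everywhere, and $\varphi$ a nonnegative smooth volume form on $U$. Suppose the integral $I(s) = \int_U |f|^{2s}\varphi$ converges for all real $s$ sufficiently large and admits a meromorphic continuation to $s \in \mathbb{C}$, and let $s_0$ be the maximum of the real parts of the poles of $I(s)$. Then for every real $t > s_0$, the integral $\int_U |f|^{2t}\varphi$ is absolutely convergent. -/
/-!
Writing `‖f‖ ^ (2 s) = exp (-s h)` with `h = -2 log ‖f‖ ≥ 0` turns `I` into the Laplace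
transform `L z = ∫ exp (-z h) dμ`, holomorphic on `re z > S` with
`L⁽ⁿ⁾ z = ∫ (-h)ⁿ exp (-z h) dμ`. Choose a real `s₁` beyond `S`, `s₀` and `t`. By the
identity theorem `F = L` near `s₁`, and `F` is holomorphic on the disc of radius `s₁ - s₀`
about `s₁`, which contains `t`. So the Taylor series of `F` at `s₁` converges at `t`; its terms
`(s₁ - t)ⁿ / n! * ∫ hⁿ exp (-s₁ h) dμ` are nonnegative and, by monotone convergence, sum to
`∫ exp (-t h) dμ`, which is therefore finite.
-/

open MeasureTheory Complex
open scoped Nat Topology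

lemma Real.hasSum_pow_div_factorial_exp (x : ℝ) :
    HasSum (fun n : ℕ => x ^ n / n !) (Real.exp x) := by
  rw [Real.exp_eq_exp_ℝ]; exact NormedSpace.expSeries_div_hasSum_exp x

lemma hasSum_pow_mul_exp_neg (q y s : ℝ) :
    HasSum (fun n : ℕ => q ^ n / n ! * (y ^ n * Real.exp (-s * y))) (Real.exp (-(s - q) * y)) := by
  rw [show -(s - q) * y = q * y + -s * y by ring, Real.exp_add]
  have hterm : (fun n : ℕ => q ^ n / n ! * (y ^ n * Real.exp (-s * y)))
      = fun n => (q * y) ^ n / n ! * Real.exp (-s * y) := by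
    funext n; rw [mul_pow]; ring
  rw [hterm]
  exact (Real.hasSum_pow_div_factorial_exp (q * y)).mul_right _

lemma pow_mul_exp_neg_le {y b c : ℝ} (hy : 0 ≤ y) (hbc : b < c) (n : ℕ) :
    y ^ n * Real.exp (-c * y) ≤ n ! / (c - b) ^ n * Real.exp (-b * y) := by
  have hcb : 0 < c - b := sub_pos.2 hbc
  calc y ^ n * Real.exp (-c * y)
      = n ! / (c - b) ^ n * (((c - b) * y) ^ n / n !) * Real.exp (-c * y) := by
        rw [mul_pow]; field_simp
    _ ≤ n ! / (c - b) ^ n * Real.exp ((c - b) * y) * Real.exp (-c * y) := by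
        gcongr
        exact Real.pow_div_factorial_le_exp (x := (c - b) * y) (mul_nonneg hcb.le hy) n
    _ = n ! / (c - b) ^ n * Real.exp (-b * y) := by
        rw [mul_assoc, ← Real.exp_add]; ring_nf

lemma norm_neg_pow_mul_cexp (y : ℝ) (n : ℕ) (z : ℂ) :
    ‖(-(y : ℂ)) ^ n * cexp (-z * y)‖ = |y| ^ n * Real.exp (-z.re * y) := by
  simp [Complex.norm_exp]

lemma re_lt_of_mem_ball {s z : ℂ} {ε : ℝ} (hz : z ∈ Metric.ball s ε) : s.re - ε < z.re := by
  have := (abs_re_le_norm (z - s)).trans_lt (mem_ball_iff_norm.1 hz)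
  rw [sub_re] at this
  linarith [(abs_lt.1 this).1]

lemma rpow_two_mul_eq_exp {r : ℝ} (hr : 0 < r) (s : ℝ) :
    r ^ (2 * s) = Real.exp (-s * (-2 * Real.log r)) := by
  rw [Real.rpow_def_of_pos hr]; ring_nf

lemma cpow_two_mul_eq_cexp {r : ℝ} (hr : 0 < r) (s : ℝ) :
    (r : ℂ) ^ (2 * (s : ℂ)) = cexp (-s * ((-2 * Real.log r : ℝ) : ℂ)) := by
  rw [cpow_def_of_ne_zero (ofReal_ne_zero.2 hr.ne'), ← ofReal_log hr.le]; push_cast; ring_nf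

lemma AnalyticAt.eventuallyEq_of_forall_real_ge {f g : ℂ → ℂ} {S x : ℝ} (hf : AnalyticAt ℂ f x)
    (hg : AnalyticAt ℂ g x) (hSx : S < x) (hfg : ∀ y : ℝ, S ≤ y → f y = g y) :
    f =ᶠ[𝓝 (x : ℂ)] g := by
  refine (hf.frequently_eq_iff_eventually_eq hg).1 ?_
  have hofReal : Filter.Tendsto ((↑) : ℝ → ℂ) (𝓝[>] x) (𝓝[≠] (x : ℂ)) :=
    tendsto_nhdsWithin_of_tendsto_nhds_of_eventually_within _
      (continuous_ofReal.continuousAt.tendsto.mono_left nhdsWithin_le_nhds)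
      (eventually_nhdsWithin_of_forall fun y (hy : x < y) => by simpa using hy.ne')
  exact hofReal.frequently (eventually_nhdsWithin_of_forall fun y hy =>
    hfg y (hSx.trans (Set.mem_Ioi.1 hy)).le).frequently

section Measure

variable {U : Type*} [MeasurableSpace U] {μ : Measure U}

lemma integrable_tsum_of_summable_integral {ι : Type*} [Countable ι] {F : ι → U → ℝ}
    (hF : ∀ i, Integrable (F i) μ) (hF0 : ∀ i x, 0 ≤ F i x) (hFx : ∀ x, Summable (F · x))
    (hsum : Summable fun i => ∫ x, F i x ∂μ) : Integrable (fun x => ∑' i, F i x) μ := by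
  have hlin : ∫⁻ x, ∑' i, ENNReal.ofReal (F i x) ∂μ = ENNReal.ofReal (∑' i, ∫ x, F i x ∂μ) := by
    rw [lintegral_tsum fun i => (hF i).aemeasurable.ennreal_ofReal,
      ENNReal.ofReal_tsum_of_nonneg (fun i => integral_nonneg (hF0 i)) hsum]
    congr 1 with i
    exact (ofReal_integral_eq_lintegral_ofReal (hF i) (.of_forall (hF0 i))).symm
  refine (integrable_toReal_of_lintegral_ne_top
    (AEMeasurable.tsum fun i => (hF i).aemeasurable.ennreal_ofReal)
    (hlin ▸ ENNReal.ofReal_ne_top)).congr (.of_forall fun x => ?_)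
  dsimp only
  rw [← ENNReal.ofReal_tsum_of_nonneg (hF0 · x) (hFx x),
    ENNReal.toReal_ofReal (tsum_nonneg (hF0 · x))]

lemma aemeasurable_log_of_integrable_rpow {g : U → ℝ} (hg : ∀ x, 0 < g x) {m : ℝ} (hm : m ≠ 0)
    (hint : Integrable (fun x => g x ^ m) μ) : AEMeasurable (fun x => Real.log (g x)) μ := by
  refine ((Real.measurable_log.comp_aemeasurable hint.aemeasurable).div_const m).congr
    (.of_forall fun x => ?_)
  simp only [Function.comp_apply, Real.log_rpow (hg x)]
  field_simp

variable {h : U → ℝ}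

lemma integrable_pow_mul_exp_neg (hm : AEMeasurable h μ) (h0 : ∀ x, 0 ≤ h x) {b c : ℝ}
    (hbc : b < c) (hb : Integrable (fun x => Real.exp (-b * h x)) μ) (n : ℕ) :
    Integrable (fun x => h x ^ n * Real.exp (-c * h x)) μ := by
  refine (hb.const_mul (n ! / (c - b) ^ n)).mono' (by fun_prop) (.of_forall fun x => ?_)
  rw [Real.norm_of_nonneg (by have := h0 x; positivity)]
  exact pow_mul_exp_neg_le (h0 x) hbc n

lemma integrable_neg_pow_mul_cexp (hm : AEMeasurable h μ) (h0 : ∀ x, 0 ≤ h x) {b : ℝ}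
    (hb : Integrable (fun x => Real.exp (-b * h x)) μ) (n : ℕ) {z : ℂ} (hz : b < z.re) :
    Integrable (fun x => (-(h x) : ℂ) ^ n * cexp (-z * h x)) μ := by
  refine (integrable_pow_mul_exp_neg hm h0 hz hb n).mono' (by fun_prop) (.of_forall fun x => ?_)
  rw [norm_neg_pow_mul_cexp, abs_of_nonneg (h0 x)]

lemma hasDerivAt_integral_neg_pow_mul_cexp (hm : AEMeasurable h μ) (h0 : ∀ x, 0 ≤ h x) {b : ℝ}
    (hb : Integrable (fun x => Real.exp (-b * h x)) μ) (n : ℕ) {s : ℂ} (hs : b < s.re) :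
    HasDerivAt (fun z : ℂ => ∫ x, (-(h x) : ℂ) ^ n * cexp (-z * h x) ∂μ)
      (∫ x, (-(h x) : ℂ) ^ (n + 1) * cexp (-s * h x) ∂μ) s := by
  obtain ⟨c, hbc, hcs⟩ := exists_between hs
  refine (hasDerivAt_integral_of_dominated_loc_of_deriv_le
    (F := fun z x => (-(h x) : ℂ) ^ n * cexp (-z * h x))
    (F' := fun z x => (-(h x) : ℂ) ^ (n + 1) * cexp (-z * h x))
    (bound := fun x => h x ^ (n + 1) * Real.exp (-c * h x))
    (Metric.ball_mem_nhds s (sub_pos.2 hcs))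
    (.of_forall fun z => by fun_prop) (integrable_neg_pow_mul_cexp hm h0 hb n hs)
    (by fun_prop) ?_ (integrable_pow_mul_exp_neg hm h0 hbc hb (n + 1)) ?_).2
  · refine .of_forall fun x z hz => ?_
    have hcz : c < z.re := by linarith [re_lt_of_mem_ball hz]
    rw [norm_neg_pow_mul_cexp, abs_of_nonneg (h0 x)]
    exact mul_le_mul_of_nonneg_left (Real.exp_le_exp.2 (by nlinarith [h0 x])) (pow_nonneg (h0 x) _)
  · refine .of_forall fun x z _ => ?_
    have hd : HasDerivAt (fun z : ℂ => -z * h x) (-(h x : ℂ)) z := by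
      simpa using (hasDerivAt_id z).neg.mul_const (h x : ℂ)
    exact (hd.cexp.const_mul ((-(h x) : ℂ) ^ n)).congr_deriv (by ring)

variable (μ h) in
noncomputable def laplaceTransform (z : ℂ) : ℂ := ∫ x, cexp (-z * h x) ∂μ

lemma iteratedDeriv_laplaceTransform (hm : AEMeasurable h μ) (h0 : ∀ x, 0 ≤ h x) {b : ℝ}
    (hb : Integrable (fun x => Real.exp (-b * h x)) μ) (n : ℕ) {s : ℂ} (hs : b < s.re) :
    iteratedDeriv n (laplaceTransform μ h) s = ∫ x, (-(h x) : ℂ) ^ n * cexp (-s * h x) ∂μ := by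
  induction n generalizing s with
  | zero => simp [laplaceTransform]
  | succ n ih =>
    have hev : iteratedDeriv n (laplaceTransform μ h)
        =ᶠ[𝓝 s] fun z => ∫ x, (-(h x) : ℂ) ^ n * cexp (-z * h x) ∂μ :=
      Filter.eventually_of_mem ((continuous_re.isOpen_preimage _ isOpen_Ioi).mem_nhds hs)
        fun z hz => ih hz
    rw [iteratedDeriv_succ, hev.deriv_eq]
    exact (hasDerivAt_integral_neg_pow_mul_cexp hm h0 hb n hs).deriv

lemma analyticAt_laplaceTransform (hm : AEMeasurable h μ) (h0 : ∀ x, 0 ≤ h x) {b : ℝ}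
    (hb : Integrable (fun x => Real.exp (-b * h x)) μ) {s : ℂ} (hs : b < s.re) :
    AnalyticAt ℂ (laplaceTransform μ h) s := by
  have hopen : IsOpen {z : ℂ | b < z.re} := continuous_re.isOpen_preimage _ isOpen_Ioi
  refine DifferentiableOn.analyticAt (fun z hz => ?_) (hopen.mem_nhds hs)
  have := hasDerivAt_integral_neg_pow_mul_cexp hm h0 hb 0 hz
  simp only [pow_zero, one_mul] at this
  exact this.differentiableAt.differentiableWithinAt

lemma iteratedDeriv_laplaceTransform_ofReal (hm : AEMeasurable h μ) (h0 : ∀ x, 0 ≤ h x)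
    {b s : ℝ} (hb : Integrable (fun x => Real.exp (-b * h x)) μ) (hs : b < s) (n : ℕ) :
    iteratedDeriv n (laplaceTransform μ h) s
      = (-1) ^ n * ((∫ x, h x ^ n * Real.exp (-s * h x) ∂μ : ℝ) : ℂ) := by
  rw [iteratedDeriv_laplaceTransform hm h0 hb n (by simpa using hs), ← integral_complex_ofReal,
    ← integral_const_mul]
  congr 1 with x
  push_cast
  rw [neg_pow, mul_assoc]

lemma integrable_exp_neg_of_differentiableOn_ball (hm : AEMeasurable h μ) (h0 : ∀ x, 0 ≤ h x)
    {b s r p : ℝ} (hb : Integrable (fun x => Real.exp (-b * h x)) μ) (hbs : b < s)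
    {G : ℂ → ℂ} (hG : DifferentiableOn ℂ G (Metric.ball (s : ℂ) r))
    (hGL : G =ᶠ[𝓝 (s : ℂ)] laplaceTransform μ h) (hrp : s - r < p) (hps : p ≤ s) :
    Integrable (fun x => Real.exp (-p * h x)) μ := by
  have hp : (p : ℂ) ∈ Metric.ball (s : ℂ) r := by
    rw [mem_ball_iff_norm, ← ofReal_sub, norm_real, Real.norm_eq_abs, abs_sub_comm,
      abs_of_nonneg (sub_nonneg.2 hps)]
    linarith
  have hcoeff : ∀ n : ℕ, (n ! : ℂ)⁻¹ • ((p : ℂ) - s) ^ n • iteratedDeriv n G s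
      = (((s - p) ^ n / n ! * ∫ x, h x ^ n * Real.exp (-s * h x) ∂μ : ℝ) : ℂ) := by
    intro n
    rw [hGL.iteratedDeriv_eq, iteratedDeriv_laplaceTransform_ofReal hm h0 hb hbs, smul_eq_mul,
      smul_eq_mul, ← mul_assoc (((p : ℂ) - s) ^ n), ← mul_pow, mul_neg_one, neg_sub]
    push_cast
    ring
  have hsum : Summable fun n => (s - p) ^ n / n ! * ∫ x, h x ^ n * Real.exp (-s * h x) ∂μ :=
    Complex.summable_ofReal.1 (funext hcoeff ▸ (Complex.hasSum_taylorSeries_on_ball hG hp).summable)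
  have := integrable_tsum_of_summable_integral
    (F := fun n x => (s - p) ^ n / n ! * (h x ^ n * Real.exp (-s * h x)))
    (fun n => (integrable_pow_mul_exp_neg hm h0 hbs hb n).const_mul _)
    (fun n x => mul_nonneg (div_nonneg (pow_nonneg (sub_nonneg.2 hps) _) n.factorial.cast_nonneg)
      (mul_nonneg (pow_nonneg (h0 x) _) (Real.exp_nonneg _)))
    (fun x => (hasSum_pow_mul_exp_neg _ _ _).summable)
    (by simpa only [integral_const_mul] using hsum)
  simpa only [(hasSum_pow_mul_exp_neg _ _ _).tsum_eq, sub_sub_cancel] using this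

end Measure

theorem stmt_0_general {U : Type*} [MeasurableSpace U] (μ : Measure U)
    (f : U → ℂ) (hf0 : ∀ x, f x ≠ 0) (hf1 : ∀ x, ‖f x‖ < 1)
    (F : ℂ → ℂ)
    (S : ℝ)
    (hconv : ∀ s : ℝ, S ≤ s →
      Integrable (fun x => (‖f x‖) ^ (2 * s)) μ)
    (hagree : ∀ s : ℝ, S ≤ s →
      F s = ∫ x, ((‖f x‖ : ℂ)) ^ (2 * (s : ℂ)) ∂μ)
    (s₀ : ℝ) (hpoles : ∀ a : ℂ, ¬ AnalyticAt ℂ F a → a.re ≤ s₀)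
    (t : ℝ) (ht : s₀ < t) :
    Integrable (fun x => (‖f x‖) ^ (2 * t)) μ := by
  set h : U → ℝ := fun x => -2 * Real.log ‖f x‖
  have hnorm : ∀ x, 0 < ‖f x‖ := fun x => norm_pos_iff.2 (hf0 x)
  have h0 : ∀ x, 0 ≤ h x := fun x =>
    mul_nonneg_of_nonpos_of_nonpos (by norm_num) (Real.log_nonpos (norm_nonneg _) (hf1 x).le)
  have hexp : ∀ s : ℝ, (fun x => ‖f x‖ ^ (2 * s)) = fun x => Real.exp (-s * h x) :=
    fun s => funext fun x => rpow_two_mul_eq_exp (hnorm x) s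
  have hm : AEMeasurable h μ :=
    (aemeasurable_log_of_integrable_rpow hnorm (by positivity)
      (hconv (max S 1) (le_max_left _ _))).const_mul (-2)
  have hFan : ∀ z : ℂ, s₀ < z.re → AnalyticAt ℂ F z := fun z hz =>
    of_not_not fun hna => (hpoles z hna).not_gt hz
  obtain ⟨b, hSb, hs₀b, htb⟩ : ∃ b, S ≤ b ∧ s₀ ≤ b ∧ t ≤ b :=
    ⟨max S (max s₀ t), by simp only [le_max_iff, le_refl, true_or, or_true, and_self]⟩
  have hb : Integrable (fun x => Real.exp (-b * h x)) μ := hexp b ▸ hconv b hSb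
  have hFL : F =ᶠ[𝓝 ((b + 1 : ℝ) : ℂ)] laplaceTransform μ h :=
    (hFan _ (by simp only [ofReal_re]; linarith)).eventuallyEq_of_forall_real_ge
      (analyticAt_laplaceTransform hm h0 hb (by simp)) (by linarith : S < b + 1) fun y hy => by
        rw [hagree y hy, laplaceTransform]
        exact integral_congr_ae (.of_forall fun x => cpow_two_mul_eq_cexp (hnorm x) y)
  have hFdiff : DifferentiableOn ℂ F (Metric.ball ((b + 1 : ℝ) : ℂ) (b + 1 - s₀)) :=
    fun z hz => (hFan z (by linarith [re_lt_of_mem_ball hz, ofReal_re (b + 1)])).differentiableAt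
      |>.differentiableWithinAt
  rw [hexp]
  exact integrable_exp_neg_of_differentiableOn_ball hm h0 hb (lt_add_one b) hFdiff hFL
    (by linarith) (by linarith)

/-- Let `U` be a complex manifold (modelled here by a measure space whose measure
`μ` records the nonnegative smooth volume form `φ`), `f : U → ℂˣ` a function with `0 < |f| < 1`
everywhere.  Suppose `I(s) = ∫_U |f|^{2s} φ` converges for all real `s` sufficiently large and
admits a meromorphic continuation `F` to all of `ℂ`, and every pole of `F` has real part `≤ s₀`.
Then for every real `t > s₀` the integral `∫_U |f|^{2t} φ` is absolutely convergent. -/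
theorem stmt_0 {U : Type*} [MeasurableSpace U] (μ : Measure U)
    (f : U → ℂ) (hf0 : ∀ x, f x ≠ 0) (hf1 : ∀ x, ‖f x‖ < 1)
    (F : ℂ → ℂ) (hF : MeromorphicOn F Set.univ)
    (S : ℝ)
    (hconv : ∀ s : ℝ, S ≤ s →
      Integrable (fun x => (‖f x‖) ^ (2 * s)) μ)
    (hagree : ∀ s : ℝ, S ≤ s →
      F s = ∫ x, ((‖f x‖ : ℂ)) ^ (2 * (s : ℂ)) ∂μ)
    (s₀ : ℝ) (hpoles : ∀ a : ℂ, ¬ AnalyticAt ℂ F a → a.re ≤ s₀)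
    (t : ℝ) (ht : s₀ < t) :
    Integrable (fun x => (‖f x‖) ^ (2 * t)) μ :=
  stmt_0_general μ f hf0 hf1 F S hconv hagree s₀ hpoles t ht
end

section
/- Let $R$ be a ring, $M$ an $R$-module, and $N : M \to M$ a nilpotent $R$-module endomorphism. Then there exists at most one finite increasing filtration $W_\bullet M$ (indexed by $\mathbb{Z}$) such that $N(W_r M) \subseteq W_{r-2}M$ for all $r$ and such that for every $r \geq 0$ the induced map $N^r : \mathrm{gr}^W_r M \to \mathrm{gr}^W_{-r} M$ is an isomorphism. -/
/-- `W` is a monodromy weight filtration for the nilpotent endomorphism `N`: a finite increasing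
filtration with `N (W r) ⊆ W (r-2)` such that for every `r ≥ 0` the map induced by `N^r` from
`gr^W_r = W r / W (r-1)` to `gr^W_{-r} = W (-r) / W (-r-1)` is an isomorphism (injectivity and
surjectivity on graded pieces are spelled out without quotients). -/
def IsMonodromyWeightFiltration {R M : Type*} [Ring R] [AddCommGroup M] [Module R M]
    (N : M →ₗ[R] M) (W : ℤ → Submodule R M) : Prop :=
  Monotone W ∧
  (∃ n : ℤ, ∀ r : ℤ, r ≤ n → W r = ⊥) ∧
  (∃ n : ℤ, ∀ r : ℤ, n ≤ r → W r = ⊤) ∧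
  (∀ r : ℤ, ∀ x ∈ W r, N x ∈ W (r - 2)) ∧
  (∀ r : ℕ,
    (∀ y ∈ W (r : ℤ), (N ^ r) y ∈ W (-(r : ℤ) - 1) → y ∈ W ((r : ℤ) - 1)) ∧
    (∀ x ∈ W (-(r : ℤ)), ∃ y ∈ W (r : ℤ), (N ^ r) y - x ∈ W (-(r : ℤ) - 1)))

private lemma aux_pow {R M : Type*} [Ring R] [AddCommGroup M] [Module R M]
    (N : M →ₗ[R] M) (W : ℤ → Submodule R M)
    (hsh : ∀ r : ℤ, ∀ x ∈ W r, N x ∈ W (r - 2)) (m : ℕ) :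
    ∀ (r : ℤ) (x : M), x ∈ W r → (N ^ m) x ∈ W (r - 2 * m) := by
  induction m with
  | zero => intro r x hx; simpa using hx
  | succ m ih =>
    intro r x hx
    have h1 : N ((N ^ m) x) ∈ W (r - 2 * m - 2) := hsh _ _ (ih r x hx)
    have h2 : (N ^ (m + 1)) x = N ((N ^ m) x) := by
      rw [pow_succ']; rfl
    rw [h2, show r - 2 * ((m + 1 : ℕ) : ℤ) = r - 2 * m - 2 by push_cast; ring]
    exact h1

/-- `W k` is characterized by `W (k+1)` and `W (-k-2)`. -/
private lemma aux_mem_iff {R M : Type*} [Ring R] [AddCommGroup M] [Module R M]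
    (N : M →ₗ[R] M) (W : ℤ → Submodule R M)
    (hW : IsMonodromyWeightFiltration N W) (k : ℕ) (x : M) :
    x ∈ W k ↔ x ∈ W ((k : ℤ) + 1) ∧ (N ^ (k + 1)) x ∈ W (-(k : ℤ) - 2) := by
  obtain ⟨hmono, -, -, hsh, hgr⟩ := hW
  have e1 : ((k + 1 : ℕ) : ℤ) = (k : ℤ) + 1 := by push_cast; ring
  have e2 : (-((k + 1 : ℕ) : ℤ) - 1) = -(k : ℤ) - 2 := by push_cast; ring
  have e3 : (((k + 1 : ℕ) : ℤ) - 1) = (k : ℤ) := by push_cast; ring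
  constructor
  · intro hx
    refine ⟨hmono (by omega) hx, ?_⟩
    have := aux_pow N W hsh (k + 1) k x hx
    rwa [show (k : ℤ) - 2 * ((k + 1 : ℕ) : ℤ) = -(k : ℤ) - 2 by push_cast; ring] at this
  · rintro ⟨h1, h2⟩
    have h3 := (hgr (k + 1)).1
    rw [e2, e3, e1] at h3
    exact h3 x h1 h2

/-- `W (-k-1)` is characterized by `W (k+1)` and `W (-k-2)`. -/
private lemma aux_eq {R M : Type*} [Ring R] [AddCommGroup M] [Module R M]
    (N : M →ₗ[R] M) (W : ℤ → Submodule R M)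
    (hW : IsMonodromyWeightFiltration N W) (k : ℕ) :
    W (-(k : ℤ) - 1) = (W ((k : ℤ) + 1)).map (N ^ (k + 1)) ⊔ W (-(k : ℤ) - 2) := by
  obtain ⟨hmono, -, -, hsh, hgr⟩ := hW
  have e1 : ((k + 1 : ℕ) : ℤ) = (k : ℤ) + 1 := by push_cast; ring
  have e2 : (-((k + 1 : ℕ) : ℤ) - 1) = -(k : ℤ) - 2 := by push_cast; ring
  have e4 : (-((k + 1 : ℕ) : ℤ)) = -(k : ℤ) - 1 := by push_cast; ring
  apply le_antisymm
  · intro x hx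
    have h5 := (hgr (k + 1)).2
    rw [e2, e4, e1] at h5
    obtain ⟨y, hy, hd⟩ := h5 x hx
    have : x = (N ^ (k + 1)) y - ((N ^ (k + 1)) y - x) := by abel
    rw [this]
    exact sub_mem (Submodule.mem_sup_left ⟨y, hy, rfl⟩) (Submodule.mem_sup_right hd)
  · apply sup_le
    · rintro x ⟨y, hy, rfl⟩
      have := aux_pow N W hsh (k + 1) ((k : ℤ) + 1) y hy
      rwa [show (k : ℤ) + 1 - 2 * ((k + 1 : ℕ) : ℤ) = -(k : ℤ) - 1 by push_cast; ring] at this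
    · exact hmono (by omega)

/-- for a nilpotent endomorphism `N` of a module `M`, there is at most one
monodromy weight filtration. -/
theorem stmt_2 {R M : Type*} [Ring R] [AddCommGroup M] [Module R M]
    (N : M →ₗ[R] M) (hN : IsNilpotent N)
    (W W' : ℤ → Submodule R M)
    (hW : IsMonodromyWeightFiltration N W)
    (hW' : IsMonodromyWeightFiltration N W') :
    W = W' := by
  obtain ⟨a, ha⟩ := hW.2.1
  obtain ⟨b, hb⟩ := hW.2.2.1
  obtain ⟨a', ha'⟩ := hW'.2.1
  obtain ⟨b', hb'⟩ := hW'.2.2.1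
  obtain ⟨K, hK⟩ := exists_nat_ge (max (max b b') (max (-a - 1) (-a' - 1)))
  simp only [sup_le_iff] at hK
  obtain ⟨⟨hKb, hKb'⟩, hKa, hKa'⟩ := hK
  have htriv : ∀ k : ℕ, K ≤ k →
      (W k = W' k ∧ W (-(k : ℤ) - 1) = W' (-(k : ℤ) - 1)) := by
    intro k hk
    have hk' : (K : ℤ) ≤ (k : ℤ) := by exact_mod_cast hk
    refine ⟨?_, ?_⟩
    · rw [hb k (by omega), hb' k (by omega)]
    · rw [ha _ (by omega), ha' _ (by omega)]
  have key : ∀ d k : ℕ, K ≤ k + d →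
      (W k = W' k ∧ W (-(k : ℤ) - 1) = W' (-(k : ℤ) - 1)) := by
    intro d
    induction d with
    | zero => intro k hk; exact htriv k (by omega)
    | succ d ih =>
      intro k hk
      by_cases hKk : K ≤ k
      · exact htriv k hKk
      · obtain ⟨h1, h2⟩ := ih (k + 1) (by omega)
        have e1 : ((k + 1 : ℕ) : ℤ) = (k : ℤ) + 1 := by push_cast; ring
        have e2 : (-((k + 1 : ℕ) : ℤ) - 1) = -(k : ℤ) - 2 := by push_cast; ring
        rw [e1] at h1
        rw [e2] at h2
        refine ⟨?_, ?_⟩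
        · ext x
          rw [aux_mem_iff N W hW k x, aux_mem_iff N W' hW' k x, h1, h2]
        · rw [aux_eq N W hW k, aux_eq N W' hW' k, h1, h2]
  funext r
  rcases le_or_gt 0 r with hr | hr
  · have := (key K r.toNat (by omega)).1
    rwa [Int.toNat_of_nonneg hr] at this
  · have := (key K (-r - 1).toNat (by omega)).2
    rwa [Int.toNat_of_nonneg (by omega), show -(-r - 1) - 1 = r by ring] at this
end

section
/- Let $V$ be a finite-dimensional complex vector space with a Hermitian form $S$ and a nilpotent endomorphism $N$ that is self-adjoint with respect to $S$ (i.e. $S(Nv, w) = S(v, Nw)$ for all $v, w$). Let $W_\bullet V$ be the monodromy weight filtration of $N$. Then $S(W_r V, W_{r'} V) = 0$ whenever $r + r' < 0$. -/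
/-- if `S` is a Hermitian form on a finite-dimensional complex vector space `V`,
`N` a nilpotent endomorphism self-adjoint with respect to `S`, and `W` the monodromy weight
filtration of `N`, then `S(W_r V, W_{r'} V) = 0` whenever `r + r' < 0`. -/
theorem stmt_3 {V : Type*} [AddCommGroup V] [Module ℂ V] [FiniteDimensional ℂ V]
    (S : V →ₗ[ℂ] V →ₛₗ[starRingEnd ℂ] ℂ)
    (hHerm : ∀ v w : V, S v w = star (S w v))
    (N : V →ₗ[ℂ] V) (hNnil : IsNilpotent N)
    (hSA : ∀ v w : V, S (N v) w = S v (N w))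
    (W : ℤ → Submodule ℂ V)
    (hW : IsMonodromyWeightFiltration N W)
    (r r' : ℤ) (h : r + r' < 0)
    (v w : V) (hv : v ∈ W r) (hw : w ∈ W r') :
    S v w = 0 := by
  obtain ⟨hMono, ⟨n, hbot⟩, _, hN, hIso⟩ := hW
  -- powers of N shift the filtration
  have pow_mem : ∀ (k : ℕ) (s : ℤ) (x : V), x ∈ W s → (N ^ k) x ∈ W (s - 2 * k) := by
    intro k
    induction k with
    | zero => intro s x hx; simpa using hx
    | succ k ih =>
      intro s x hx
      have h1 := hN (s - 2 * k) _ (ih s x hx)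
      have hpow : (N ^ (k + 1)) x = N ((N ^ k) x) := by
        rw [pow_succ']; rfl
      rw [hpow]
      have : (s - 2 * k - 2 : ℤ) = s - 2 * (k + 1 : ℕ) := by push_cast; ring
      rwa [this] at h1
  -- powers of N are self-adjoint
  have pow_adj : ∀ (k : ℕ) (u z : V), S ((N ^ k) u) z = S u ((N ^ k) z) := by
    intro k
    induction k with
    | zero => intro u z; simp
    | succ k ih =>
      intro u z
      have h1 : (N ^ (k + 1)) u = N ((N ^ k) u) := by rw [pow_succ']; rfl
      have h2 : (N ^ (k + 1)) z = (N ^ k) (N z) := by rw [pow_succ]; rfl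
      rw [h1, h2, hSA, ih]
  -- key induction on the depth of the smaller index
  have key : ∀ (k : ℕ) (a b : ℤ) (v w : V), a ≤ b → a + b < 0 → a ≤ n + k →
      v ∈ W a → w ∈ W b → S v w = 0 := by
    intro k
    induction k with
    | zero =>
      intro a b v w _ _ hle hv _
      have hWa : W a = ⊥ := hbot a (by omega)
      rw [hWa, Submodule.mem_bot] at hv
      simp [hv]
    | succ k ih =>
      intro a b v w hab hsum hle hv hw
      by_cases hna : a ≤ n
      · have hWa : W a = ⊥ := hbot a hna
        rw [hWa, Submodule.mem_bot] at hv
        simp [hv]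
      · have ha : a < 0 := by omega
        set m : ℕ := (-a).toNat with hm
        have hma : (m : ℤ) = -a := by
          rw [hm, Int.toNat_of_nonneg (by omega)]
        have hv' : v ∈ W (-(m : ℤ)) := by
          have : -(m : ℤ) = a := by omega
          rwa [this]
        obtain ⟨y, hy, hdiff⟩ := (hIso m).2 v hv'
        have hdiff' : (N ^ m) y - v ∈ W (a - 1) := by
          have : -(m : ℤ) - 1 = a - 1 := by omega
          rwa [this] at hdiff
        have h1 : S ((N ^ m) y - v) w = 0 :=
          ih (a - 1) b _ _ (by omega) (by omega) (by omega) hdiff' hw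
        have h2 : S ((N ^ m) y) w = 0 := by
          rw [pow_adj]
          have hz : (N ^ m) w ∈ W (b - 2 * m) := pow_mem m b w hw
          have h3 : S ((N ^ m) w) y = 0 := by
            refine ih (b - 2 * m) (m : ℤ) _ _ (by omega) (by omega) (by omega) hz ?_
            rwa [hm] at hy
          rw [hHerm, h3, star_zero]
        rw [map_sub, LinearMap.sub_apply, h2, zero_sub, neg_eq_zero] at h1
        exact h1
  rcases le_total r r' with hle | hle
  · exact key (r - n).toNat r r' v w hle h (by omega) hv hw
  · rw [hHerm, key (r' - n).toNat r' r w v hle (by omega) (by omega) hw hv, star_zero]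
end

section
/- Let $V$ be a finite-dimensional complex vector space with a nilpotent endomorphism $N$ and monodromy weight filtration $W_\bullet V$. Suppose $F_\bullet V$ is an increasing filtration with $N(F_k V) \subseteq F_{k+1}V$ such that $N^r$ induces a filtered isomorphism $(\mathrm{gr}^W_r V, F_\bullet) \to (\mathrm{gr}^W_{-r}V, F_{\bullet + r})$ for all $r \geq 0$. Assume $F_{p-1}V = 0$ and let $0 \neq m \in F_p V$ have monodromy weight $r$ (i.e. $m \in W_r V \setminus W_{r-1}V$). Then: (a) $r \geq 0$; (b) $N^{r+1} m = 0$ and $N^r m \neq 0$, so $r + 1 = \min\{\ell \geq 1 : N^\ell m = 0\}$; and (c) the class $[m] \in \mathrm{gr}^W_r V$ lies in the primitive part $\ker(N^{r+1} : \mathrm{gr}^W_r V \to \mathrm{gr}^W_{-r-2} V)$. -/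
/-- Let `V` be a finite-dimensional complex vector space, `N` nilpotent with
monodromy weight filtration `W`, and `F` an increasing filtration with `N(F k) ⊆ F (k+1)` such
that `N^r` induces a filtered isomorphism `(gr^W_r, F) → (gr^W_{-r}, F_{•+r})` for `r ≥ 0`
(spelled out: injectivity on graded pieces with the filtration, and filtered surjectivity).
If `F (p-1) = 0` and `0 ≠ m ∈ F p` has monodromy weight `r` (i.e. `m ∈ W r \ W (r-1)`),
then (a) `r ≥ 0`, (b) `N^{r+1} m = 0` and `N^r m ≠ 0`, so `r+1 = min {ℓ ≥ 1 : N^ℓ m = 0}`,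
and (c) the class of `m` in `gr^W_r` is primitive, i.e. `N^{r+1} m ∈ W (-r-3)`. -/
theorem stmt_5 {V : Type*} [AddCommGroup V] [Module ℂ V] [FiniteDimensional ℂ V]
    (N : V →ₗ[ℂ] V) (hNnil : IsNilpotent N)
    (W : ℤ → Submodule ℂ V) (hW : IsMonodromyWeightFiltration N W)
    (F : ℤ → Submodule ℂ V) (hFmono : Monotone F)
    (hNF : ∀ k : ℤ, ∀ x ∈ F k, N x ∈ F (k + 1))
    (hfiltiso : ∀ r : ℕ, ∀ k : ℤ,
      (∀ y, y ∈ F k → y ∈ W (r : ℤ) → (N ^ r) y ∈ W (-(r : ℤ) - 1) → y ∈ W ((r : ℤ) - 1)) ∧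
      (∀ x, x ∈ F (k + r) → x ∈ W (-(r : ℤ)) →
        ∃ y, y ∈ F k ∧ y ∈ W (r : ℤ) ∧ (N ^ r) y - x ∈ W (-(r : ℤ) - 1)))
    (p : ℤ) (hFlow : F (p - 1) = ⊥)
    (m : V) (hm0 : m ≠ 0) (hmF : m ∈ F p)
    (r : ℤ) (hmW : m ∈ W r) (hmW' : m ∉ W (r - 1)) :
    0 ≤ r ∧
    (N ^ (r.toNat + 1)) m = 0 ∧ (N ^ r.toNat) m ≠ 0 ∧
    ((r.toNat + 1 : ℕ) = sInf {ℓ : ℕ | 1 ≤ ℓ ∧ (N ^ ℓ) m = 0}) ∧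
    (N ^ (r.toNat + 1)) m ∈ W (-r - 3) := by
  obtain ⟨hWmono, ⟨n, hbot⟩, -, hWN, -⟩ := hW
  have hFbot : ∀ k : ℤ, k ≤ p - 1 → F k = ⊥ := fun k hk =>
    le_bot_iff.mp (hFlow ▸ hFmono hk)
  -- iterated N on W
  have hNW : ∀ (j : ℕ) (t : ℤ), ∀ x ∈ W t, (N ^ j) x ∈ W (t - 2 * j) := by
    intro j
    induction j with
    | zero => intro t x hx; simpa using hx
    | succ j ih =>
      intro t x hx
      have h2 := hWN (t - 2 * j) _ (ih t x hx)
      rw [pow_succ', Module.End.mul_apply]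
      have e : t - 2 * ((j : ℤ) + 1) = t - 2 * j - 2 := by ring
      rw [show ((j + 1 : ℕ) : ℤ) = (j : ℤ) + 1 by push_cast; ring, e]
      exact h2
  -- iterated N on F
  have hNFj : ∀ (j : ℕ) (k : ℤ), ∀ x ∈ F k, (N ^ j) x ∈ F (k + j) := by
    intro j
    induction j with
    | zero => intro k x hx; simpa using hx
    | succ j ih =>
      intro k x hx
      have h2 := hNF (k + j) _ (ih k x hx)
      rw [pow_succ', Module.End.mul_apply]
      rw [show (k : ℤ) + ((j + 1 : ℕ) : ℤ) = k + j + 1 by push_cast; ring]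
      exact h2
  -- minimal weight
  have hmin : ∀ x : V, x ≠ 0 → ∀ t : ℤ, x ∈ W t →
      ∃ s : ℤ, s ≤ t ∧ x ∈ W s ∧ x ∉ W (s - 1) := by
    intro x hx t hxt
    have hWb : ∀ k : ℤ, k ≤ n → x ∉ W k := by
      intro k hk h
      rw [hbot k hk] at h
      exact hx (by simpa using h)
    have hnt : n < t := by
      by_contra h
      push_neg at h
      exact hWb t h hxt
    have hmem : (t - n).toNat ∈ {d : ℕ | x ∈ W (n + d)} := by
      simp only [Set.mem_setOf_eq]
      rw [Int.toNat_of_nonneg (by omega)]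
      rwa [show n + (t - n) = t by ring]
    have hTne : {d : ℕ | x ∈ W (n + d)}.Nonempty := ⟨_, hmem⟩
    set d0 := sInf {d : ℕ | x ∈ W (n + d)} with hd0
    have hd0T : x ∈ W (n + (d0 : ℤ)) := Nat.sInf_mem hTne
    have hd0pos : 1 ≤ d0 := by
      by_contra h
      push_neg at h
      have hz : d0 = 0 := by omega
      rw [hz] at hd0T
      exact hWb n le_rfl (by simpa using hd0T)
    refine ⟨n + d0, ?_, hd0T, ?_⟩
    · have h1 := Nat.sInf_le hmem
      omega
    · intro hcon
      have h3 : (d0 - 1 : ℕ) ∈ {d : ℕ | x ∈ W (n + d)} := by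
        simp only [Set.mem_setOf_eq]
        rwa [show (n : ℤ) + ((d0 - 1 : ℕ) : ℤ) = n + d0 - 1 by omega]
      have := Nat.sInf_le h3
      omega
  -- (a) r ≥ 0
  have hr0 : 0 ≤ r := by
    by_contra h
    push_neg at h
    have hc : ((-r).toNat : ℤ) = -r := Int.toNat_of_nonneg (by omega)
    obtain ⟨y, hyF, hyW, hy⟩ := (hfiltiso (-r).toNat (p + r)).2 m
      (by rw [hc, show p + r + -r = p by ring]; exact hmF)
      (by rw [hc, neg_neg]; exact hmW)
    have hy0 : y = 0 := by
      rw [hFbot (p + r) (by omega)] at hyF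
      simpa using hyF
    rw [hy0, map_zero, zero_sub] at hy
    have h2 := neg_mem hy
    rw [hc] at h2
    simp only [neg_neg] at h2
    exact hmW' h2
  have hrc : (r.toNat : ℤ) = r := Int.toNat_of_nonneg hr0
  -- N^{r+1} m = 0
  have hxW : (N ^ (r.toNat + 1)) m ∈ W (-r - 2) := by
    have h2 := hNW (r.toNat + 1) r m hmW
    rwa [show r - 2 * ((r.toNat + 1 : ℕ) : ℤ) = -r - 2 by push_cast [hrc]; ring] at h2
  have hxF : (N ^ (r.toNat + 1)) m ∈ F (p + r + 1) := by
    have h2 := hNFj (r.toNat + 1) p m hmF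
    rwa [show p + ((r.toNat + 1 : ℕ) : ℤ) = p + r + 1 by push_cast [hrc]; ring] at h2
  have hx0 : (N ^ (r.toNat + 1)) m = 0 := by
    by_contra hx
    obtain ⟨s, hst, hxs, hxs'⟩ := hmin _ hx _ hxW
    have hsc : ((-s).toNat : ℤ) = -s := Int.toNat_of_nonneg (by omega)
    obtain ⟨y, hyF, hyW, hy⟩ := (hfiltiso (-s).toNat (p + r + 1 + s)).2 _
      (by rw [hsc, show p + r + 1 + s + -s = p + r + 1 by ring]; exact hxF)
      (by rw [hsc, neg_neg]; exact hxs)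
    have hy0 : y = 0 := by
      rw [hFbot (p + r + 1 + s) (by omega)] at hyF
      simpa using hyF
    rw [hy0, map_zero, zero_sub] at hy
    have h2 := neg_mem hy
    rw [hsc] at h2
    simp only [neg_neg] at h2
    exact hxs' h2
  -- N^r m ≠ 0
  have hNr : (N ^ r.toNat) m ≠ 0 := by
    intro h
    have h2 := (hfiltiso r.toNat p).1 m hmF (by rw [hrc]; exact hmW)
      (by rw [h]; exact zero_mem _)
    rw [hrc] at h2
    exact hmW' h2
  have hset : (r.toNat + 1) ∈ {ℓ : ℕ | 1 ≤ ℓ ∧ (N ^ ℓ) m = 0} := ⟨by omega, hx0⟩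
  refine ⟨hr0, hx0, hNr, ?_, by rw [hx0]; exact zero_mem _⟩
  refine le_antisymm ?_ (Nat.sInf_le hset)
  apply le_csInf ⟨_, hset⟩
  rintro ℓ ⟨hℓ1, hℓ0⟩
  by_contra h
  push_neg at h
  apply hNr
  have he : N ^ r.toNat = N ^ (r.toNat - ℓ) * N ^ ℓ := by
    rw [← pow_add]
    congr 1
    omega
  rw [he, Module.End.mul_apply, hℓ0, map_zero]
end

section
/- Let $A$ be a (possibly noncommutative) ring containing a central-like pair $s, t$ with the commutation relation $s t = t (s - 1)$, acting on a module $M$. For $w \in M$, let $b_w(s) \in \mathbb{C}[s]$ denote the monic polynomial of minimal degree such that $P \cdot (t w) = b_w(s) \cdot w$ for some $P \in A$ (assuming such exists and is unique). Then for any $r \in \mathbb{C}$, the polynomial $b_w(s)$ divides $(s + r) \cdot b_{(s+r)w}(s)$. -/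
open Polynomial

/-- `q` satisfies the Bernstein–Sato type functional equation for the section `w`:
there is `P ∈ A` with `P ⬝ (t ⬝ w) = q(s) ⬝ w`. -/
def HasBFunctionalEq {A M : Type*} [Ring A] [Algebra ℂ A] [AddCommGroup M] [Module A M]
    (s t : A) (w : M) (q : ℂ[X]) : Prop :=
  ∃ P : A, P • (t • w) = (aeval s q) • w

/-- in a ring `A` containing elements `s, t` with `s t = t (s - 1)`, acting on a
module `M`, let `b_w(s)` be the (monic, minimal-degree, hence generating the ideal of all
polynomials satisfying the functional equation) Bernstein–Sato polynomial of `w`, and likewise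
`c = b_{(s+r)w}`.  Then `b_w(s)` divides `(s + r) · b_{(s+r)w}(s)`. -/
theorem stmt_6 {A M : Type*} [Ring A] [Algebra ℂ A] [AddCommGroup M] [Module A M]
    (s t : A) (hst : s * t = t * (s - 1))
    (w : M) (r : ℂ) (b c : ℂ[X]) (hb : b.Monic) (hc : c.Monic)
    (hbdef : ∀ q : ℂ[X], HasBFunctionalEq s t w q ↔ b ∣ q)
    (hcdef : ∀ q : ℂ[X],
      HasBFunctionalEq s t ((s + algebraMap ℂ A r) • w) q ↔ c ∣ q) :
    b ∣ (X + C r) * c := by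
  rw [← hbdef]
  obtain ⟨P, hP⟩ := (hcdef c).mpr dvd_rfl
  set sr := s + algebraMap ℂ A r with hsr
  have h1 : t * s = s * t + t := by
    rw [hst, mul_sub, mul_one, sub_add_cancel]
  have hts : t * sr = (sr + 1) * t := by
    rw [hsr, mul_add, add_mul, add_mul, h1, one_mul, ← Algebra.commutes r t]
    abel
  refine ⟨P * (sr + 1), ?_⟩
  have haev : aeval s ((X + C r) * c) = aeval s c * sr := by
    rw [mul_comm, map_mul, map_add, aeval_X, aeval_C, hsr]
  rw [haev, mul_smul, ← mul_smul (sr + 1) t w, ← hts, mul_smul, hP, ← mul_smul]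
end

section
/- In the setting of Bernstein–Sato polynomials of sections: let $w$ be a section with $b$-function $b_w(s)$ and suppose $b_w(-\alpha) = 0$ for some $\alpha$. Then $\mathrm{mult}_{s=-\alpha} b_{(s+\alpha)w}(s) = \mathrm{mult}_{s=-\alpha} b_w(s) - 1$, i.e. multiplying $w$ by $(s+\alpha)$ drops the multiplicity of the root $-\alpha$ of the $b$-function by exactly one. -/
open Polynomial

section helpers
variable {A : Type*} [Ring A] [Algebra ℂ A]

lemma aux_s_pow (s t : A) (hst : s * t = t * (s - 1)) (i : ℕ) :
    s * t ^ i = t ^ i * (s - (i : A)) := by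
  induction i with
  | zero => simp
  | succ n ih =>
    calc s * t ^ (n+1) = (s * t) * t ^ n := by rw [pow_succ']; noncomm_ring
    _ = t * ((s - 1) * t ^ n) := by rw [hst]; noncomm_ring
    _ = t * (s * t ^ n) - t * t ^ n := by noncomm_ring
    _ = t * (t ^ n * (s - (n : A))) - t * t ^ n := by rw [ih]
    _ = t ^ (n+1) * (s - ((n+1 : ℕ) : A)) := by push_cast; rw [pow_succ']; noncomm_ring

lemma aux_aeval_pow (s t : A) (hst : s * t = t * (s - 1)) (i : ℕ) (p : ℂ[X]) :
    aeval s p * t ^ i = t ^ i * aeval (s - (i : A)) p := by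
  induction p using Polynomial.induction_on with
  | C a => simp [Algebra.commutes]
  | add p q hp hq => simp [add_mul, mul_add, hp, hq]
  | monomial n a ih =>
    have e : C a * X ^ (n+1) = (C a * X ^ n) * X := by ring
    rw [e]
    rw [show (aeval s) (C a * X ^ n * X) = (aeval s) (C a * X ^ n) * s from by
      rw [map_mul, aeval_X]]
    rw [show (aeval (s - (i:A))) (C a * X ^ n * X)
        = (aeval (s - (i:A))) (C a * X ^ n) * (s - (i:A)) from by rw [map_mul, aeval_X]]
    rw [mul_assoc, aux_s_pow s t hst i, ← mul_assoc, ih, mul_assoc]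

lemma aux_aeval_comm (s : A) (p q : ℂ[X]) :
    aeval s p * aeval s q = aeval s q * aeval s p := by
  rw [← map_mul, ← map_mul, mul_comm]

end helpers

/-- in the setting of Bernstein–Sato polynomials of sections (modelled by a ring `A`
containing `s, t` with `s t = t (s-1)`, in which every operator expands as `∑_i P_i(s) t^i` with
the `P_i` commuting with all polynomials in `s`), if `b = b_w` with `b(-α) = 0` and
`c = b_{(s+α)w}`, then `mult_{s=-α} c = mult_{s=-α} b - 1`: multiplying `w` by `(s+α)` drops the
multiplicity of the root `-α` of the `b`-function by exactly one. -/
theorem stmt_7 {A M : Type*} [Ring A] [Algebra ℂ A] [AddCommGroup M] [Module A M]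
    (s t : A) (hst : s * t = t * (s - 1))
    (hexp : ∀ P : A, ∃ (k : ℕ) (Q : ℕ → A),
      (∀ i : ℕ, ∀ q : ℂ[X], Q i * aeval s q = aeval s q * Q i) ∧
      P = ∑ i ∈ Finset.range k, Q i * t ^ i)
    (w : M) (α : ℂ) (b c : ℂ[X]) (hb : b.Monic) (hc : c.Monic)
    (hbdef : ∀ q : ℂ[X], HasBFunctionalEq s t w q ↔ b ∣ q)
    (hcdef : ∀ q : ℂ[X],
      HasBFunctionalEq s t ((s + algebraMap ℂ A α) • w) q ↔ c ∣ q)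
    (hroot : b.eval (-α) = 0) :
    c.rootMultiplicity (-α) = b.rootMultiplicity (-α) - 1 := by
  classical
  set a : A := algebraMap ℂ A α with ha
  have hta : t * a = a * t := (Algebra.commutes α t).symm
  have hkey : t * (s + a) = (s + a + 1) * t := by
    have h1 : t * s = s * t + t := by rw [hst]; noncomm_ring
    calc t * (s + a) = t * s + t * a := by noncomm_ring
    _ = (s * t + t) + a * t := by rw [h1, hta]
    _ = (s + a + 1) * t := by noncomm_ring
  have hsmul : t • ((s + a) • w) = (s + a + 1) • (t • w) := by
    rw [← mul_smul, ← mul_smul, hkey]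
  have haevalXC : aeval s (X + C α) = s + a := by
    rw [map_add, aeval_X, aeval_C]
  -- Direction 1 : b ∣ (X + C α) * c
  have hbc : b ∣ (X + C α) * c := by
    rw [← hbdef]
    obtain ⟨P, hP⟩ := (hcdef c).mpr dvd_rfl
    refine ⟨P * (s + a + 1), ?_⟩
    have he : aeval s ((X + C α) * c) = aeval s c * (s + a) := by
      rw [mul_comm, map_mul, haevalXC]
    calc (P * (s + a + 1)) • (t • w) = P • ((s + a + 1) • (t • w)) := by rw [mul_smul]
    _ = P • (t • ((s + a) • w)) := by rw [hsmul]
    _ = aeval s c • ((s + a) • w) := hP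
    _ = (aeval s c * (s + a)) • w := by rw [mul_smul]
    _ = aeval s ((X + C α) * c) • w := by rw [he]
  -- Direction 2 : c ∣ pr * b1
  obtain ⟨b1, hb1⟩ : (X - C (-α)) ∣ b := dvd_iff_isRoot.mpr hroot
  have hb1' : b = (X + C α) * b1 := by rw [hb1, map_neg, sub_neg_eq_add]
  obtain ⟨P, hP⟩ := (hbdef b).mpr dvd_rfl
  obtain ⟨k, Q, hQcomm, hPsum⟩ := hexp P
  set pr : ℂ[X] := ∏ j ∈ Finset.range k, (X + C (α + j + 1)) with hpr
  have hcq : c ∣ pr * b1 := by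
    rw [← hcdef]
    set R : ℕ → ℂ[X] :=
      fun i => ∏ j ∈ (Finset.range k).erase i, (X + C (α + j + 1 - i)) with hR
    set P' : A := ∑ i ∈ Finset.range k, Q i * t ^ i * aeval s (R i) with hP'
    have key : P' * (s + a + 1) = aeval s pr * P := by
      rw [hP', hPsum, Finset.mul_sum, Finset.sum_mul]
      refine Finset.sum_congr rfl fun i hi => ?_
      have h1 : aeval s pr * (Q i * t ^ i) = Q i * (t ^ i * aeval (s - (i : A)) pr) := by
        rw [← mul_assoc, ← hQcomm i pr, mul_assoc, aux_aeval_pow s t hst]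
      have h2 : aeval (s - (i : A)) pr = aeval s ((X + C (α + 1)) * R i) := by
        have hcomp : pr.comp (X - C (i : ℂ)) = (X + C (α + 1)) * R i := by
          rw [hpr, prod_comp]
          rw [Finset.prod_congr rfl fun j (_ : j ∈ Finset.range k) =>
            show (X + C (α + j + 1)).comp (X - C (i : ℂ)) = X + C (α + j + 1 - i) from by
              rw [add_comp, X_comp, C_comp, map_sub]; ring]
          rw [← Finset.mul_prod_erase (Finset.range k)
            (fun j => X + C (α + j + 1 - (i : ℂ))) hi, hR]
          congr 2
          ring
        rw [← hcomp, aeval_comp]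
        congr 1
        rw [map_sub, aeval_X, aeval_C, map_natCast]
      have h3 : aeval s ((X + C (α + 1)) * R i) = aeval s (R i) * (s + a + 1) := by
        rw [mul_comm, map_mul]
        congr 1
        rw [map_add, aeval_X, aeval_C, map_add, map_one, ha, add_assoc]
      rw [h1, h2, h3, ← mul_assoc, ← mul_assoc]
    refine ⟨P', ?_⟩
    have he2 : aeval s (pr * b1) * (s + a) = aeval s (pr * b) := by
      rw [← haevalXC, ← map_mul, hb1']
      congr 1
      ring
    calc P' • (t • ((s + a) • w)) = P' • ((s + a + 1) • (t • w)) := by rw [hsmul]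
    _ = (P' * (s + a + 1)) • (t • w) := by rw [mul_smul]
    _ = (aeval s pr * P) • (t • w) := by rw [key]
    _ = aeval s pr • (P • (t • w)) := by rw [mul_smul]
    _ = aeval s pr • (aeval s b • w) := by rw [hP]
    _ = aeval s (pr * b) • w := by rw [map_mul, mul_smul]
    _ = (aeval s (pr * b1) * (s + a)) • w := by rw [he2]
    _ = aeval s (pr * b1) • ((s + a) • w) := by rw [mul_smul]
  -- Multiplicity bookkeeping
  have hbne : b ≠ 0 := hb.ne_zero
  have hcne : c ≠ 0 := hc.ne_zero
  have hb1ne : b1 ≠ 0 := by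
    rintro rfl
    rw [mul_zero] at hb1'
    exact hbne hb1'
  have hprne : pr ≠ 0 := (monic_prod_of_monic _ _ fun j _ => monic_X_add_C _).ne_zero
  have hdvd_le : ∀ p q : ℂ[X], p ∣ q → q ≠ 0 →
      p.rootMultiplicity (-α) ≤ q.rootMultiplicity (-α) := fun p q hpq hq =>
    (le_rootMultiplicity_iff hq).mpr ((pow_rootMultiplicity_dvd p (-α)).trans hpq)
  have hXC1 : (X + C α).rootMultiplicity (-α) = 1 := by
    rw [show (X + C α : ℂ[X]) = X - C (-α) from by rw [map_neg, sub_neg_eq_add]]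
    exact rootMultiplicity_X_sub_C_self
  have hmb : b.rootMultiplicity (-α) = b1.rootMultiplicity (-α) + 1 := by
    rw [hb1', rootMultiplicity_mul (by rw [← hb1']; exact hbne), hXC1, add_comm]
  have hprm : pr.rootMultiplicity (-α) = 0 := by
    refine rootMultiplicity_eq_zero ?_
    rw [IsRoot, hpr, eval_prod]
    refine Finset.prod_ne_zero_iff.mpr fun j _ => ?_
    rw [eval_add, eval_X, eval_C]
    rw [show -α + (α + j + 1) = ((j + 1 : ℕ) : ℂ) from by push_cast; ring]
    exact_mod_cast Nat.succ_ne_zero j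
  have hle1 : b.rootMultiplicity (-α) ≤ c.rootMultiplicity (-α) + 1 := by
    have := hdvd_le _ _ hbc (mul_ne_zero (monic_X_add_C α).ne_zero hcne)
    rwa [rootMultiplicity_mul (mul_ne_zero (monic_X_add_C α).ne_zero hcne), hXC1,
      add_comm] at this
  have hle2 : c.rootMultiplicity (-α) ≤ b1.rootMultiplicity (-α) := by
    have := hdvd_le _ _ hcq (mul_ne_zero hprne hb1ne)
    rwa [rootMultiplicity_mul (mul_ne_zero hprne hb1ne), hprm, zero_add] at this
  omega
end

section
/- Let $V$ be a finite-dimensional complex vector space with Hermitian form $S$, nilpotent self-adjoint endomorphism $N$ with monodromy weight filtration $W_\bullet$, such that for every $r \geq 0$ the form $(-1)^r S(\cdot, N^r \cdot)$ restricted to the primitive part $P_r = \ker(N^{r+1}: \mathrm{gr}^W_r \to \mathrm{gr}^W_{-r-2})$ is $\varepsilon$-definite for a sign $\varepsilon \in \{\pm 1\}$ independent of $r$ (up to the factor $(-1)^r$ as indicated). If $m \in V$ is a nonzero element of monodromy weight $r \geq 0$ whose class in $\mathrm{gr}^W_r V$ is primitive, then $\varepsilon \cdot (-1)^r \cdot S(m,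 N^r m) > 0$; in particular $S(m, N^r m) \neq 0$ while $S(m, N^{r+a} m) = 0$ for all $a \geq 1$. -/
theorem pow_mem_aux {V : Type*} [AddCommGroup V] [Module ℂ V]
    (N : V →ₗ[ℂ] V) (W : ℤ → Submodule ℂ V)
    (hN : ∀ r : ℤ, ∀ x ∈ W r, N x ∈ W (r - 2)) :
    ∀ (j : ℕ) (a : ℤ) (x : V), x ∈ W a → (N ^ j) x ∈ W (a - 2 * j) := by
  intro j
  induction j with
  | zero => intro a x hx; simpa using hx
  | succ j ih =>
    intro a x hx
    have h1 : N x ∈ W (a - 2) := hN a x hx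
    have h2 := ih (a - 2) (N x) h1
    have : (N ^ (j + 1)) x = (N ^ j) (N x) := by
      rw [pow_succ]; rfl
    rw [this]
    convert h2 using 2
    push_cast; ring

theorem SA_pow_aux {V : Type*} [AddCommGroup V] [Module ℂ V]
    (S : V →ₗ[ℂ] V →ₛₗ[starRingEnd ℂ] ℂ)
    (N : V →ₗ[ℂ] V)
    (hSA : ∀ v w : V, S (N v) w = S v (N w)) :
    ∀ (j : ℕ) (v w : V), S ((N ^ j) v) w = S v ((N ^ j) w) := by
  intro j
  induction j with
  | zero => intro v w; simp
  | succ j ih =>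
    intro v w
    have e : ∀ u : V, (N ^ (j + 1)) u = (N ^ j) (N u) := by
      intro u; rw [pow_succ]; rfl
    have e2 : (N ^ (j + 1)) w = N ((N ^ j) w) := by rw [pow_succ']; rfl
    rw [e v, ih (N v) w, hSA, ← e2]

theorem vanish_aux {V : Type*} [AddCommGroup V] [Module ℂ V]
    (S : V →ₗ[ℂ] V →ₛₗ[starRingEnd ℂ] ℂ)
    (hHerm : ∀ v w : V, S v w = star (S w v))
    (N : V →ₗ[ℂ] V)
    (hSA : ∀ v w : V, S (N v) w = S v (N w))
    (W : ℤ → Submodule ℂ V) (n₀ : ℤ)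
    (hbot : ∀ r : ℤ, r ≤ n₀ → W r = ⊥)
    (hN : ∀ r : ℤ, ∀ x ∈ W r, N x ∈ W (r - 2))
    (hsur : ∀ r : ℕ, ∀ x ∈ W (-(r : ℤ)), ∃ y ∈ W (r : ℤ), (N ^ r) y - x ∈ W (-(r : ℤ) - 1)) :
    ∀ (k : ℕ) (a b : ℤ), a + b < 0 → min a b ≤ n₀ + k →
      ∀ x ∈ W a, ∀ y ∈ W b, S x y = 0 := by
  intro k
  induction k with
  | zero =>
    intro a b hab hmin x hx y hy
    rcases min_le_iff.mp (by simpa using hmin) with h | h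
    · rw [hbot a h] at hx
      simp [(Submodule.mem_bot ℂ).mp hx]
    · rw [hbot b h] at hy
      simp [(Submodule.mem_bot ℂ).mp hy]
  | succ k ih =>
    intro a b hab hmin x hx y hy
    by_cases hk : min a b ≤ n₀ + k
    · exact ih a b hab hk x hx y hy
    have key : ∀ a b : ℤ, a + b < 0 → ¬ min a b ≤ n₀ + k → min a b ≤ n₀ + k + 1 →
        ∀ x ∈ W a, ∀ y ∈ W b, b ≤ a → S x y = 0 := by
      intro a b hab hk hm1 x hx y hy hba
      have hbneg : b < 0 := by
        have := min_le_left a b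
        have := min_le_right a b
        omega
      set n : ℕ := (-b).toNat with hn
      have hnb : (n : ℤ) = -b := Int.toNat_of_nonneg (by omega)
      have hy' : y ∈ W (-(n : ℤ)) := by
        have : -(n : ℤ) = b := by omega
        rwa [this]
      obtain ⟨z, hz, hzy⟩ := hsur n y hy'
      have hminb : min a b = b := min_eq_right hba
      rw [hminb] at hk hm1
      have h1 : S x ((N ^ n) z) = 0 := by
        rw [← SA_pow_aux S N hSA]
        have hx' := pow_mem_aux N W hN n a x hx
        refine ih (a - 2 * n) n ?_ ?_ _ hx' z hz
        · omega
        · have := min_le_left (a - 2 * (n:ℤ)) (n:ℤ)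
          omega
      have h2 : S x ((N ^ n) z - y) = 0 := by
        have hzy' : (N ^ n) z - y ∈ W (b - 1) := by
          have : -(n : ℤ) - 1 = b - 1 := by omega
          rwa [this] at hzy
        refine ih a (b - 1) (by omega) ?_ x hx _ hzy'
        have := min_le_right a (b - 1)
        omega
      have h3 : S x ((N ^ n) z - y) = S x ((N ^ n) z) - S x y := map_sub _ _ _
      rw [h1, h2] at h3
      linear_combination h3
    rcases le_total b a with h | h
    · exact key a b hab hk (by push_cast at hmin; omega) x hx y hy h
    · rw [hHerm x y, key b a (by omega) (by rwa [min_comm] at hk)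
        (by rw [min_comm]; push_cast at hmin; omega) y hy x hx h]
      simp

/-- let `V` be a finite-dimensional complex vector space with Hermitian form `S`,
nilpotent self-adjoint endomorphism `N` with monodromy weight filtration `W`, such that for every
`r ≥ 0` the form `(-1)^r S(·, N^r ·)` on the primitive part
`P_r = ker(N^{r+1} : gr^W_r → gr^W_{-r-2})` is `ε`-definite (with a sign `ε = ±1` independent of
`r`).  If `m ∈ V` is a nonzero element of monodromy weight `r ≥ 0` whose class in `gr^W_r` is
primitive, then `ε·(-1)^r·S(m, N^r m) > 0`; in particular `S(m, N^r m) ≠ 0` while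
`S(m, N^{r+a} m) = 0` for all `a ≥ 1`. -/
theorem stmt_19 {V : Type*} [AddCommGroup V] [Module ℂ V] [FiniteDimensional ℂ V]
    (S : V →ₗ[ℂ] V →ₛₗ[starRingEnd ℂ] ℂ)
    (hHerm : ∀ v w : V, S v w = star (S w v))
    (N : V →ₗ[ℂ] V) (hNnil : IsNilpotent N)
    (hSA : ∀ v w : V, S (N v) w = S v (N w))
    (W : ℤ → Submodule ℂ V) (hW : IsMonodromyWeightFiltration N W)
    (ε : ℝ) (hε : ε = 1 ∨ ε = -1)
    (hdef : ∀ r : ℕ, ∀ v : V, v ∈ W (r : ℤ) → (N ^ (r + 1)) v ∈ W (-(r : ℤ) - 3) →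
      v ∉ W ((r : ℤ) - 1) → 0 < ε * (-1 : ℝ) ^ r * (S v ((N ^ r) v)).re)
    (m : V) (hm0 : m ≠ 0) (r : ℕ)
    (hmW : m ∈ W (r : ℤ)) (hmW' : m ∉ W ((r : ℤ) - 1))
    (hprim : (N ^ (r + 1)) m ∈ W (-(r : ℤ) - 3)) :
    (0 < ε * (-1 : ℝ) ^ r * (S m ((N ^ r) m)).re ∧ (S m ((N ^ r) m)).im = 0) ∧
    S m ((N ^ r) m) ≠ 0 ∧
    (∀ a : ℕ, 1 ≤ a → S m ((N ^ (r + a)) m) = 0) := by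
  obtain ⟨hmono, ⟨n₀, hbot⟩, -, hN4, h5⟩ := hW
  have hsur : ∀ r : ℕ, ∀ x ∈ W (-(r : ℤ)), ∃ y ∈ W (r : ℤ), (N ^ r) y - x ∈ W (-(r : ℤ) - 1) :=
    fun r => (h5 r).2
  have hpos := hdef r m hmW hprim hmW'
  have hreal : S m ((N ^ r) m) = star (S m ((N ^ r) m)) := by
    conv_lhs => rw [← SA_pow_aux S N hSA r m m]
    exact hHerm _ _
  have him : (S m ((N ^ r) m)).im = 0 := by
    have := congrArg Complex.im hreal
    simp only [Complex.star_def, Complex.conj_im] at this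
    linarith
  refine ⟨⟨hpos, him⟩, ?_, ?_⟩
  · intro h
    rw [h] at hpos
    simp at hpos
  · intro a ha
    have hmem : (N ^ (r + a)) m ∈ W ((r : ℤ) - 2 * (r + a)) :=
      pow_mem_aux N W hN4 (r + a) (r : ℤ) m hmW
    have hmem' : (N ^ (r + a)) m ∈ W (-(r : ℤ) - 2 * a) := by
      convert hmem using 2
      push_cast; ring
    refine vanish_aux S hHerm N hSA W n₀ hbot hN4 hsur
      ((min (r : ℤ) (-(r : ℤ) - 2 * a) - n₀).toNat) (r : ℤ) (-(r : ℤ) - 2 * a)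
      (by push_cast; omega) ?_ m hmW _ hmem'
    have := Int.self_le_toNat (min (r : ℤ) (-(r : ℤ) - 2 * a) - n₀)
    omega
end
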